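/- arXiv:2312.12103 — 2 statements merged into one kernel-verified Lean document; each statement's English description precedes it below -/
import Mathlib

section
/- Let n be a positive integer, let ω ∈ ℂ be a primitive n-th root of unity, let a(X) ∈ ℂ[X] be a polynomial of degree strictly less than n, and let x ∈ ℂ satisfy x^n ≠ 1. Then ∑_{j=0}^{n−1} a(ω^{−j})/(1 − ω^j x) = n · a(x)/(1 − x^n). -/
open Finset Polynomial

theorem stmt_0 (n : ℕ) (hn : 0 < n) (ω : ℂ) (hω : IsPrimitiveRoot ω n)
    (a : Polynomial ℂ) (ha : a.degree < (n : WithBot ℕ)) (x : ℂ) (hx : x ^ n ≠ 1) :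
    ∑ j ∈ Finset.range n, Polynomial.eval (ω ^ (-(j : ℤ))) a / (1 - ω ^ j * x) =
      (n : ℂ) * Polynomial.eval x a / (1 - x ^ n) := by
  have hω1 : ω ^ n = 1 := hω.pow_eq_one
  have hω0 : ω ≠ 0 := hω.ne_zero hn.ne'
  have hxn : (1 : ℂ) - x ^ n ≠ 0 := sub_ne_zero.mpr fun h => hx h.symm
  have hden : ∀ j : ℕ, (1 : ℂ) - ω ^ j * x ≠ 0 := by
    intro j h
    apply hx
    have h1 : (1 : ℂ) = ω ^ j * x := sub_eq_zero.mp h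
    calc x ^ n = ((ω ^ j) ^ n) * x ^ n := by
          rw [← pow_mul, mul_comm j n, pow_mul, hω1, one_pow, one_mul]
      _ = (ω ^ j * x) ^ n := (mul_pow _ _ _).symm
      _ = 1 := by rw [← h1, one_pow]
  have hdeg : a.natDegree < n := by
    by_cases h0 : a = 0
    · simpa [h0] using hn
    · exact (Polynomial.natDegree_lt_iff_degree_lt h0).mpr ha
  -- key lemma for monomials
  have key : ∀ k ∈ range n,
      ∑ j ∈ range n, (ω ^ (-(j : ℤ))) ^ k / (1 - ω ^ j * x) = (n : ℂ) * x ^ k / (1 - x ^ n) := by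
    intro k hk
    rw [mem_range] at hk
    have termEq : ∀ j ∈ range n,
        (ω ^ (-(j : ℤ))) ^ k / (1 - ω ^ j * x) =
          (∑ m ∈ range n, (ω ^ ((m : ℤ) - (k : ℤ))) ^ j * x ^ m) / (1 - x ^ n) := by
      intro j _
      have hy : (ω ^ j * x) ^ n = x ^ n := by
        rw [mul_pow, ← pow_mul, mul_comm j n, pow_mul, hω1, one_pow, one_mul]
      have hgeom : (∑ m ∈ range n, (ω ^ j * x) ^ m) * (1 - ω ^ j * x) = 1 - x ^ n := by
        have h2 := geom_sum_mul (ω ^ j * x) n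
        linear_combination -h2 - hy
      have hsum : ∑ m ∈ range n, (ω ^ ((m : ℤ) - (k : ℤ))) ^ j * x ^ m =
          (ω ^ (-(j : ℤ))) ^ k * ∑ m ∈ range n, (ω ^ j * x) ^ m := by
        rw [Finset.mul_sum]
        refine Finset.sum_congr rfl fun m _ => ?_
        rw [mul_pow, ← mul_assoc]
        congr 1
        rw [← zpow_natCast (ω ^ ((m : ℤ) - (k : ℤ))) j, ← zpow_mul,
          ← zpow_natCast (ω ^ (-(j : ℤ))) k, ← zpow_mul,
          ← zpow_natCast ω j, ← zpow_natCast (ω ^ (j : ℤ)) m, ← zpow_mul,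
          ← zpow_add₀ hω0]
        congr 1
        ring
      rw [div_eq_div_iff (hden j) hxn, hsum, mul_assoc, hgeom]
    rw [Finset.sum_congr rfl termEq, ← Finset.sum_div, Finset.sum_comm]
    congr 1
    have inner : ∀ m ∈ range n, ∑ j ∈ range n, (ω ^ ((m : ℤ) - (k : ℤ))) ^ j * x ^ m =
        if m = k then (n : ℂ) * x ^ k else 0 := by
      intro m hm
      rw [mem_range] at hm
      rw [← Finset.sum_mul]
      by_cases hmk : m = k
      · subst hmk
        simp
      · have hζ : ω ^ ((m : ℤ) - (k : ℤ)) ≠ 1 := by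
          intro h1
          have := (hω.zpow_eq_one_iff_dvd _).mp h1
          have h0 : (m : ℤ) - (k : ℤ) = 0 := by
            refine Int.eq_zero_of_abs_lt_dvd this ?_
            rw [abs_sub_lt_iff]
            constructor <;> push_cast <;> omega
          apply hmk
          omega
        have hζn : (ω ^ ((m : ℤ) - (k : ℤ))) ^ n = 1 := by
          rw [← zpow_natCast (ω ^ ((m : ℤ) - (k : ℤ))) n, ← zpow_mul, mul_comm,
            zpow_mul, zpow_natCast, hω1, one_zpow]
        rw [if_neg hmk, geom_sum_eq hζ, hζn, sub_self, zero_div, zero_mul]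
    rw [Finset.sum_congr rfl inner, Finset.sum_ite_eq' (range n) k fun _ => (n : ℂ) * x ^ k,
      if_pos (mem_range.mpr hk)]
  -- assemble
  calc ∑ j ∈ range n, Polynomial.eval (ω ^ (-(j : ℤ))) a / (1 - ω ^ j * x)
      = ∑ j ∈ range n, ∑ k ∈ range n, a.coeff k * ((ω ^ (-(j : ℤ))) ^ k / (1 - ω ^ j * x)) := by
        refine Finset.sum_congr rfl fun j _ => ?_
        rw [eval_eq_sum_range' hdeg, Finset.sum_div]
        exact Finset.sum_congr rfl fun k _ => (mul_div_assoc _ _ _)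
    _ = ∑ k ∈ range n, a.coeff k * ((n : ℂ) * x ^ k / (1 - x ^ n)) := by
        rw [Finset.sum_comm]
        refine Finset.sum_congr rfl fun k hk => ?_
        rw [← Finset.mul_sum, key k hk]
    _ = (n : ℂ) * Polynomial.eval x a / (1 - x ^ n) := by
        rw [eval_eq_sum_range' hdeg, Finset.mul_sum, Finset.sum_div]
        exact Finset.sum_congr rfl fun k _ => by ring
end

section
/- Let m be a positive integer or half-integer (2m ∈ ℕ), let n be a positive integer, and let p be an integer with 0 ≤ p < n. Let τ lie in the complex upper half-plane and z₁, z₂ ∈ ℂ with n·z₁ ∉ ℤ + ℤτ. Then for either choice of sign ε ∈ {+1, −1}: (1) ∑_{k=0}^{n−1} e^{2πipk/n} Φ₁^{[nm,0]}(τ, z₁ − k/n, z₂ + εk/n) = n ∑_{j∈ℤ} e^{2πinmj(z₁+z₂)+2πipz₁} q^{nmj²+pj}/(1 − e^{2πinz₁} q^{nj}); and (2) ∑_{k=0}^{n−1} e^{−2πipk/n} Φ₁^{[nm,0]}(τ, z₁ + k/n, z₂ + εk/n) = n ∑_{j∈ℤ} e^{2πinmj(z₁+z₂)+2πipz₁}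 q^{nmj²+pj}/(1 − e^{2πinz₁} q^{nj}). -/
noncomputable section

open Complex

/-- `e2 w = exp (2 π i w)`; with `q = e^{2πiτ}`, the power `q^x` corresponds to `e2 (x * τ)`. -/
def e2 (w : ℂ) : ℂ := Complex.exp (2 * (Real.pi : ℂ) * Complex.I * w)

/-- Jacobi-type theta function `θ^{(ε)}_{n,m}(τ, z) = ∑_{j∈ℤ} ε^j q^{m(j+n/(2m))²} e^{2πim(j+n/(2m))z}`. -/
def jtheta (ε n m τ z : ℂ) : ℂ :=
  ∑' j : ℤ, ε ^ j *
    e2 (m * ((j : ℂ) + n / (2 * m)) ^ 2 * τ + m * ((j : ℂ) + n / (2 * m)) * z)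

/-- Mock theta function `Φ₁^{(ε)[m,s]}(τ, z₁, z₂)`. -/
def Phi1 (ε m s τ z₁ z₂ : ℂ) : ℂ :=
  ∑' j : ℤ, ε ^ j *
    e2 (m * (j : ℂ) * (z₁ + z₂) + s * z₁ + (m * (j : ℂ) ^ 2 + s * (j : ℂ)) * τ) /
      (1 - e2 (z₁ + (j : ℂ) * τ))

/-- Dedekind eta function `η(τ) = q^{1/24} ∏_{k≥1} (1 - q^k)`. -/
def dedekindEta (τ : ℂ) : ℂ := e2 (τ / 24) * ∏' k : ℕ, (1 - e2 (((k : ℂ) + 1) * τ))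

/-- Jacobi theta `ϑ₁₁(τ, z) = i ∑_{j∈ℤ} (−1)^j q^{(j+1/2)²/2} e^{2πi(j+1/2)z}`. -/
def theta11 (τ z : ℂ) : ℂ :=
  Complex.I * ∑' j : ℤ, (-1 : ℂ) ^ j *
    e2 (((j : ℂ) + 1 / 2) ^ 2 / 2 * τ + ((j : ℂ) + 1 / 2) * z)

/-- Indefinite double sum `(∑_{j,p∈ℤ, 0<p≤j} − ∑_{j,p∈ℤ, j<p≤0}) f j p`. -/
def indefSum (f : ℤ → ℤ → ℂ) : ℂ :=
  ∑' jp : ℤ × ℤ,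
    ((if 0 < jp.2 ∧ jp.2 ≤ jp.1 then f jp.1 jp.2 else 0) -
      (if jp.1 < jp.2 ∧ jp.2 ≤ 0 then f jp.1 jp.2 else 0))

/-- `g^{[m]}_{n,ν}(τ)`. -/
def gfun (m : ℂ) (n ν : ℤ) (τ : ℂ) : ℂ :=
  indefSum fun j p =>
    (-1 : ℂ) ^ j *
      e2 (((m + 1 / 2) * ((j : ℂ) + (ν : ℂ) - ((ν : ℂ) + 1 / 2) / (2 * m + 1)) ^ 2 -
        m * ((p : ℂ) + (ν : ℂ) - (n : ℂ) / (2 * m)) ^ 2) * τ)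

/-- `h^{[m]}_{n,ν}(τ, z)`. -/
def hfun (m : ℂ) (n ν : ℤ) (τ z : ℂ) : ℂ :=
  ∑' j : ℤ,
    e2 (m * (j : ℂ) * z + (n : ℂ) * z / 2 +
        (m * (j : ℂ) ^ 2 + (n : ℂ) * ((j : ℂ) + (ν : ℂ))) * τ) /
      (1 - e2 (m * z + 2 * m * ((j : ℂ) + (ν : ℂ)) * τ))

/-- `G^{[m]}_{n,ν}(τ, z)`. -/
def Gfun (m : ℂ) (n ν : ℤ) (τ z : ℂ) : ℂ :=
  gfun m n ν τ * jtheta 1 (n : ℂ) m τ z +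
    (-1 : ℂ) ^ ν * e2 (-(m * (ν : ℂ) ^ 2) * τ) *
      jtheta (-1) ((ν : ℂ) + 1 / 2) (m + 1 / 2) τ 0 * hfun m n ν τ z

/-- `F^{[m](a,b)}_{n,ν}(τ, z)`. -/
def Ffun (m : ℂ) (a b n ν : ℤ) (τ z : ℂ) : ℂ :=
  e2 ((a : ℂ) * z / 2 + (a : ℂ) ^ 2 / (4 * m) * τ) *
    Gfun m n ν τ (z + (a : ℂ) * τ / m + (b : ℂ) / m)

/-- The coefficient `f_{j,k}` of Lemma 3.1:
`f_{j,k} = (−1)^j q^{(m+1/2)(j+s/(2m+1))² − k²/(4m)} e^{−2πijm(z₁−z₂)+πik(z₁−z₂)}`. -/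
def fcoef (m s τ z₁ z₂ : ℂ) (j k : ℤ) : ℂ :=
  (-1 : ℂ) ^ j *
    e2 (((m + 1 / 2) * ((j : ℂ) + s / (2 * m + 1)) ^ 2 - (k : ℂ) ^ 2 / (4 * m)) * τ +
      (-((j : ℂ) * m) + (k : ℂ) / 2) * (z₁ - z₂))


/-!
Shifting `z₁` by `-s k/n` and `z₂` by `ε k/n` (with `s, ε = ±1`) changes the exponent in the
numerator of every term of `Φ₁^{[nm,0]}` by the integer `M k (ε - s)/2`, and multiplies
`y = e^{2πiz₁} q^j` in the denominator by `ω^{-k}` for the primitive `n`-th root of unity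
`ω = e^{2πis/n}`. Exchanging the finite sum over `k` with the sum over `j`, everything reduces to
`∑_k ω^{pk} / (1 - y ω^{-k}) = n y^p / (1 - y^n)` for `0 ≤ p < n`, which follows by writing
`1 / (1 - y ω^{-k}) = (∑_{r<n} y^r ω^{-rk}) / (1 - y^n)` and using `∑_k ω^{(p-r)k} = n δ_{pr}`.
-/

open Finset Filter

theorem e2_add (a b : ℂ) : e2 (a + b) = e2 a * e2 b := by
  simp only [e2, mul_add, exp_add]

theorem e2_neg (a : ℂ) : e2 (-a) = (e2 a)⁻¹ := by
  simp only [e2, mul_neg, exp_neg]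

theorem e2_intCast (t : ℤ) : e2 t = 1 := by
  rw [e2, mul_comm]
  exact exp_int_mul_two_pi_mul_I t

theorem e2_add_intCast (w : ℂ) (t : ℤ) : e2 (w + t) = e2 w := by
  rw [e2_add, e2_intCast, mul_one]

theorem e2_pow (w : ℂ) (r : ℕ) : e2 w ^ r = e2 (r * w) := by
  rw [e2, e2, ← exp_nat_mul]
  ring_nf

theorem e2_eq_one_iff (w : ℂ) : e2 w = 1 ↔ ∃ t : ℤ, w = t := by
  have h2πI : 2 * (Real.pi : ℂ) * I ≠ 0 := by simp [Real.pi_ne_zero]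
  rw [e2, exp_eq_one_iff]
  refine exists_congr fun t => ?_
  rw [mul_comm (t : ℂ), mul_right_inj' h2πI]

theorem norm_e2 (w : ℂ) : ‖e2 w‖ = Real.exp (-(2 * Real.pi * w.im)) := by
  rw [e2, norm_exp]
  simp [mul_re, mul_im]

theorem isPrimitiveRoot_e2_div {n : ℕ} (hn : n ≠ 0) {s : ℂ} (hs : s = 1 ∨ s = -1) :
    IsPrimitiveRoot (e2 (s / n)) n := by
  have h₁ : IsPrimitiveRoot (e2 (1 / n)) n := by
    convert isPrimitiveRoot_exp n hn using 1
    rw [e2]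
    ring_nf
  rcases hs with rfl | rfl
  · exact h₁
  · rw [neg_div, e2_neg]
    exact h₁.inv

theorem IsPrimitiveRoot.geom_sum_zpow_eq_zero {K : Type*} [Field K] {ω : K} {n : ℕ}
    (hω : IsPrimitiveRoot ω n) {d : ℤ} (hd : ¬(n : ℤ) ∣ d) :
    ∑ k ∈ range n, (ω ^ d) ^ k = 0 := by
  have hωd : ω ^ d ≠ 1 := by rwa [Ne, hω.zpow_eq_one_iff_dvd]
  have hωdn : (ω ^ d) ^ n = 1 := by
    rw [← zpow_natCast, ← zpow_mul, mul_comm, zpow_mul, zpow_natCast, hω.pow_eq_one, one_zpow]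
  rw [geom_sum_eq hωd, hωdn, sub_self, zero_div]

theorem one_div_one_sub_eq_geom_sum_div {K : Type*} [Field K] {y : K} {n : ℕ}
    (hy : y ^ n ≠ 1) : 1 / (1 - y) = (∑ r ∈ range n, y ^ r) / (1 - y ^ n) := by
  have hy₁ : 1 - y ≠ 0 := by
    rintro h
    rw [← sub_eq_zero.mp h, one_pow] at hy
    exact hy rfl
  rw [div_eq_div_iff hy₁ (sub_ne_zero.mpr hy.symm), one_mul, geom_sum_mul_neg]

theorem IsPrimitiveRoot.sum_pow_div_one_sub_mul_inv_pow {K : Type*} [Field K] {ω x : K}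
    {n P : ℕ} (hω : IsPrimitiveRoot ω n) (hP : P < n) (hx : x ^ n ≠ 1) :
    ∑ k ∈ range n, ω ^ (P * k) / (1 - x * ω⁻¹ ^ k) = n * x ^ P / (1 - x ^ n) := by
  have hω₀ : ω ≠ 0 := hω.ne_zero (by omega)
  have hxωn (k : ℕ) : (x * ω⁻¹ ^ k) ^ n = x ^ n := by
    rw [mul_pow, ← pow_mul, mul_comm k, pow_mul, inv_pow, hω.pow_eq_one, inv_one, one_pow, mul_one]
  have hterm (k r : ℕ) : ω ^ (P * k) * (x * ω⁻¹ ^ k) ^ r = x ^ r * (ω ^ ((P : ℤ) - r)) ^ k := by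
    rw [zpow_sub₀ hω₀, zpow_natCast, zpow_natCast]
    field_simp
    ring
  have hinner (r : ℕ) (hr : r ∈ range n) (hrP : r ≠ P) :
      ∑ k ∈ range n, (ω ^ ((P : ℤ) - r)) ^ k = 0 := by
    refine hω.geom_sum_zpow_eq_zero fun hdvd => hrP ?_
    have := Int.eq_zero_of_abs_lt_dvd hdvd (by rw [mem_range] at hr; rw [abs_lt]; omega)
    omega
  calc ∑ k ∈ range n, ω ^ (P * k) / (1 - x * ω⁻¹ ^ k)
      = ∑ k ∈ range n, ∑ r ∈ range n, x ^ r * (ω ^ ((P : ℤ) - r)) ^ k / (1 - x ^ n) := by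
        refine sum_congr rfl fun k _ => ?_
        rw [div_eq_mul_one_div, one_div_one_sub_eq_geom_sum_div (hy := (hxωn k).symm ▸ hx), hxωn,
          mul_div_assoc', mul_sum, sum_div]
        simp only [hterm]
    _ = ∑ r ∈ range n, x ^ r * (∑ k ∈ range n, (ω ^ ((P : ℤ) - r)) ^ k) / (1 - x ^ n) := by
        rw [sum_comm]
        simp only [mul_sum, sum_div]
    _ = n * x ^ P / (1 - x ^ n) := by
        rw [sum_eq_single_of_mem P (mem_range.mpr hP) fun r hr hrP => by
          rw [hinner r hr hrP, mul_zero, zero_div]]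
        simp only [sub_self, zpow_zero, one_pow, sum_const, card_range, nsmul_eq_mul, mul_one]
        ring

theorem eventually_half_le_norm_one_sub_e2 {τ : ℂ} (hτ : 0 < τ.im) (w : ℂ) :
    ∀ᶠ j : ℤ in cofinite, 1 / 2 ≤ ‖1 - e2 (w + j * τ)‖ := by
  have hslope : -(2 * Real.pi * τ.im) < 0 := by
    have := Real.pi_pos
    nlinarith
  have hnorm : (fun j : ℤ => ‖e2 (w + j * τ)‖) =
      fun j : ℤ => Real.exp (-(2 * Real.pi * w.im) + -(2 * Real.pi * τ.im) * j) := by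
    ext j
    rw [norm_e2]
    simp only [add_im, mul_im, intCast_re, intCast_im, zero_mul, add_zero]
    ring_nf
  rw [Int.cofinite_eq, eventually_sup]
  constructor
  · have hbig : Tendsto (fun j : ℤ => ‖e2 (w + j * τ)‖) atBot atTop := by
      rw [hnorm]
      exact Real.tendsto_exp_atTop.comp <| tendsto_atTop_add_const_left _ _ <|
        (tendsto_intCast_atBot_iff.mpr tendsto_id).const_mul_atBot_of_neg hslope
    filter_upwards [hbig.eventually_ge_atTop 2] with j hj
    have := norm_sub_norm_le (e2 (w + j * τ)) 1
    rw [norm_sub_rev, norm_one] at this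
    linarith
  · have hsmall : Tendsto (fun j : ℤ => ‖e2 (w + j * τ)‖) atTop (nhds 0) := by
      rw [hnorm]
      exact Real.tendsto_exp_atBot.comp <| tendsto_atBot_add_const_left _ _ <|
        tendsto_intCast_atTop_atTop.const_mul_atTop_of_neg hslope
    filter_upwards [hsmall.eventually (gt_mem_nhds (by norm_num : (0 : ℝ) < 1 / 2))] with j hj
    have := norm_sub_norm_le 1 (e2 (w + j * τ))
    rw [norm_one] at this
    linarith

theorem summable_e2_div_one_sub_e2 {a τ : ℂ} (ha : 0 < (a * τ).im) (hτ : 0 < τ.im) (σ w : ℂ) :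
    Summable fun j : ℤ => e2 (a * j * σ + a * j ^ 2 * τ) / (1 - e2 (w + j * τ)) := by
  have hθ : Summable fun j : ℤ => jacobiTheta₂_term j (a * σ) (2 * a * τ) := by
    rw [summable_jacobiTheta₂_term_iff, mul_assoc]
    simpa using ha
  refine (hθ.norm.mul_right 2).of_norm_bounded_eventually ?_
  filter_upwards [eventually_half_le_norm_one_sub_e2 hτ w] with j hj
  have hterm : e2 (a * j * σ + a * j ^ 2 * τ) = jacobiTheta₂_term j (a * σ) (2 * a * τ) := by
    rw [e2, jacobiTheta₂_term]
    ring_nf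
  rw [norm_div, hterm, div_le_iff₀ (by linarith)]
  nlinarith [norm_nonneg (jacobiTheta₂_term j (a * σ) (2 * a * τ))]

theorem Phi1_one_zero_add_add (m τ z₁ z₂ : ℂ) {u v : ℂ} (huv : ∃ t : ℤ, m * (u + v) = t) :
    Phi1 1 m 0 τ (z₁ + u) (z₂ + v) =
      ∑' j : ℤ, e2 (m * j * (z₁ + z₂) + m * j ^ 2 * τ) / (1 - e2 (z₁ + j * τ) * e2 u) := by
  obtain ⟨t, ht⟩ := huv
  refine tsum_congr fun j => ?_
  have hnum : m * j * (z₁ + u + (z₂ + v)) + 0 * (z₁ + u) + (m * j ^ 2 + 0 * j) * τ =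
      m * j * (z₁ + z₂) + m * j ^ 2 * τ + ((j * t : ℤ) : ℂ) := by
    push_cast
    linear_combination (j : ℂ) * ht
  rw [one_zpow, one_mul, hnum, e2_add_intCast, ← e2_add, add_right_comm]

theorem sum_e2_mul_Phi1_eq {M n P : ℕ} (hM : 0 < M) (hP : P < n) {τ : ℂ} (hτ : 0 < τ.im)
    {z₁ : ℂ} (z₂ : ℂ) (hz : ∀ a b : ℤ, (n : ℂ) * z₁ ≠ a + b * τ) {ε s : ℂ}
    (hε : ε = 1 ∨ ε = -1) (hs : s = 1 ∨ s = -1) :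
    ∑ k ∈ range n, e2 (s * P * k / n) *
        Phi1 1 (n * (M / 2)) 0 τ (z₁ - s * (k / n)) (z₂ + ε * (k / n)) =
      n * ∑' j : ℤ, e2 (n * (M / 2) * j * (z₁ + z₂) + P * z₁ + (n * (M / 2) * j ^ 2 + P * j) * τ) /
        (1 - e2 (n * z₁ + n * j * τ)) := by
  have hn : (n : ℂ) ≠ 0 := by exact_mod_cast (show n ≠ 0 by omega)
  set m : ℂ := n * (M / 2)
  set ω := e2 (s / n)
  have hω : IsPrimitiveRoot ω n := isPrimitiveRoot_e2_div (by omega) hs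
  have hmτ : 0 < (m * τ).im := by
    have : (m * τ).im = n * M / 2 * τ.im := by
      simp only [m, mul_im, mul_re, natCast_re, natCast_im, div_ofNat_re, div_ofNat_im]
      ring
    rw [this]
    have : 0 < n := by omega
    positivity
  have hroot (k : ℕ) : e2 (-(s * (k / n))) = ω⁻¹ ^ k := by
    rw [e2_neg, inv_pow, e2_pow]
    ring_nf
  have hshift (k : ℕ) : Phi1 1 m 0 τ (z₁ - s * (k / n)) (z₂ + ε * (k / n)) =
      ∑' j : ℤ, e2 (m * j * (z₁ + z₂) + m * j ^ 2 * τ) / (1 - e2 (z₁ + j * τ) * ω⁻¹ ^ k) := by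
    obtain ⟨δ, hδ⟩ : ∃ δ : ℤ, ε - s = 2 * δ := by
      rcases hε with rfl | rfl <;> rcases hs with rfl | rfl
      exacts [⟨0, by norm_num⟩, ⟨1, by norm_num⟩, ⟨-1, by norm_num⟩, ⟨0, by norm_num⟩]
    rw [sub_eq_add_neg, Phi1_one_zero_add_add _ _ _ _ ⟨M * k * δ, ?_⟩, hroot]
    have hk : (n : ℂ) * (k / n) = k := mul_div_cancel₀ _ hn
    push_cast
    linear_combination (M / 2 * (ε - s)) * hk + (M * k / 2 : ℂ) * hδ
  have hsummable (k : ℕ) : Summable fun j : ℤ =>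
      e2 (m * j * (z₁ + z₂) + m * j ^ 2 * τ) / (1 - e2 (z₁ + j * τ) * ω⁻¹ ^ k) := by
    refine (summable_e2_div_one_sub_e2 hmτ hτ (z₁ + z₂) (z₁ + -(s * (k / n)))).congr fun j => ?_
    rw [← hroot, ← e2_add, add_right_comm]
  have hyn (j : ℤ) : e2 (z₁ + j * τ) ^ n ≠ 1 := by
    rw [e2_pow, Ne, e2_eq_one_iff]
    rintro ⟨t, ht⟩
    exact hz t (-(n * j)) (by push_cast; linear_combination ht)
  calc ∑ k ∈ range n, e2 (s * P * k / n) * Phi1 1 m 0 τ (z₁ - s * (k / n)) (z₂ + ε * (k / n))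
      = ∑ k ∈ range n, ∑' j : ℤ, ω ^ (P * k) *
          (e2 (m * j * (z₁ + z₂) + m * j ^ 2 * τ) / (1 - e2 (z₁ + j * τ) * ω⁻¹ ^ k)) := by
        refine sum_congr rfl fun k _ => ?_
        have hωP : e2 (s * P * k / n) = ω ^ (P * k) := by
          rw [e2_pow]
          push_cast
          ring_nf
        rw [hshift, ← tsum_mul_left, hωP]
    _ = ∑' j : ℤ, e2 (m * j * (z₁ + z₂) + m * j ^ 2 * τ) *
          ∑ k ∈ range n, ω ^ (P * k) / (1 - e2 (z₁ + j * τ) * ω⁻¹ ^ k) := by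
        rw [← Summable.tsum_finsetSum fun k _ => (hsummable k).mul_left _]
        refine tsum_congr fun j => ?_
        rw [mul_sum]
        exact sum_congr rfl fun k _ => by ring
    _ = n * ∑' j : ℤ, e2 (m * j * (z₁ + z₂) + P * z₁ + (m * j ^ 2 + P * j) * τ) /
          (1 - e2 (n * z₁ + n * j * τ)) := by
        rw [← tsum_mul_left]
        refine tsum_congr fun j => ?_
        rw [hω.sum_pow_div_one_sub_mul_inv_pow hP (hyn j), e2_pow, e2_pow, mul_div_assoc',
          mul_left_comm, ← e2_add]
        ring_nf

theorem stmt_1_general (M : ℕ) (hM : 0 < M) (m : ℂ) (hm : m = (M : ℂ) / 2)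
    (n : ℕ) (p : ℤ) (hp0 : 0 ≤ p) (hpn : p < (n : ℤ))
    (τ : ℂ) (hτ : 0 < τ.im) (z₁ z₂ : ℂ)
    (hz : ∀ a b : ℤ, (n : ℂ) * z₁ ≠ (a : ℂ) + (b : ℂ) * τ)
    (ε : ℂ) (hε : ε = 1 ∨ ε = -1) :
    (∑ k ∈ Finset.range n, e2 ((p : ℂ) * (k : ℂ) / (n : ℂ)) *
        Phi1 1 ((n : ℂ) * m) 0 τ (z₁ - (k : ℂ) / (n : ℂ)) (z₂ + ε * ((k : ℂ) / (n : ℂ))) =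
      (n : ℂ) * ∑' j : ℤ,
        e2 ((n : ℂ) * m * (j : ℂ) * (z₁ + z₂) + (p : ℂ) * z₁ +
            ((n : ℂ) * m * (j : ℂ) ^ 2 + (p : ℂ) * (j : ℂ)) * τ) /
          (1 - e2 ((n : ℂ) * z₁ + (n : ℂ) * (j : ℂ) * τ))) ∧
    (∑ k ∈ Finset.range n, e2 (-((p : ℂ) * (k : ℂ) / (n : ℂ))) *
        Phi1 1 ((n : ℂ) * m) 0 τ (z₁ + (k : ℂ) / (n : ℂ)) (z₂ + ε * ((k : ℂ) / (n : ℂ))) =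
      (n : ℂ) * ∑' j : ℤ,
        e2 ((n : ℂ) * m * (j : ℂ) * (z₁ + z₂) + (p : ℂ) * z₁ +
            ((n : ℂ) * m * (j : ℂ) ^ 2 + (p : ℂ) * (j : ℂ)) * τ) /
          (1 - e2 ((n : ℂ) * z₁ + (n : ℂ) * (j : ℂ) * τ))) := by
  subst hm
  lift p to ℕ using hp0 with P
  have hP : P < n := by exact_mod_cast hpn
  constructor
  · simpa using sum_e2_mul_Phi1_eq hM hP hτ z₂ hz hε (Or.inl rfl)
  · simpa [neg_div] using sum_e2_mul_Phi1_eq hM hP hτ z₂ hz hε (Or.inr rfl)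

theorem stmt_1 (M : ℕ) (hM : 0 < M) (m : ℂ) (hm : m = (M : ℂ) / 2)
    (n : ℕ) (hn : 0 < n) (p : ℤ) (hp0 : 0 ≤ p) (hpn : p < (n : ℤ))
    (τ : ℂ) (hτ : 0 < τ.im) (z₁ z₂ : ℂ)
    (hz : ∀ a b : ℤ, (n : ℂ) * z₁ ≠ (a : ℂ) + (b : ℂ) * τ)
    (ε : ℂ) (hε : ε = 1 ∨ ε = -1) :
    (∑ k ∈ Finset.range n, e2 ((p : ℂ) * (k : ℂ) / (n : ℂ)) *
        Phi1 1 ((n : ℂ) * m) 0 τ (z₁ - (k : ℂ) / (n : ℂ)) (z₂ + ε * ((k : ℂ) / (n : ℂ))) =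
      (n : ℂ) * ∑' j : ℤ,
        e2 ((n : ℂ) * m * (j : ℂ) * (z₁ + z₂) + (p : ℂ) * z₁ +
            ((n : ℂ) * m * (j : ℂ) ^ 2 + (p : ℂ) * (j : ℂ)) * τ) /
          (1 - e2 ((n : ℂ) * z₁ + (n : ℂ) * (j : ℂ) * τ))) ∧
    (∑ k ∈ Finset.range n, e2 (-((p : ℂ) * (k : ℂ) / (n : ℂ))) *
        Phi1 1 ((n : ℂ) * m) 0 τ (z₁ + (k : ℂ) / (n : ℂ)) (z₂ + ε * ((k : ℂ) / (n : ℂ))) =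
      (n : ℂ) * ∑' j : ℤ,
        e2 ((n : ℂ) * m * (j : ℂ) * (z₁ + z₂) + (p : ℂ) * z₁ +
            ((n : ℂ) * m * (j : ℂ) ^ 2 + (p : ℂ) * (j : ℂ)) * τ) /
          (1 - e2 ((n : ℂ) * z₁ + (n : ℂ) * (j : ℂ) * τ))) :=
  stmt_1_general M hM m hm n p hp0 hpn τ hτ z₁ z₂ hz ε hε
end
end
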